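/- Let u : ℝᵈ → ℝ be convex and differentiable, with quadratic cost c(x,y) = (1/2)‖x - y‖². Then for any measurable map S with the same push-forward as T = ∇u (i.e., T_#ν = S_#ν for a probability measure ν with density on ℝᵈ), one has ∫ (1/2)‖x - ∇u(x)‖² dν(x) ≤ ∫ (1/2)‖x - S(x)‖² dν(x). -/

import Mathlib

/-!
Write `φ(y) = u*(y) - ‖y‖²/2` with `u*` the convex conjugate of `u`. Fenchel–Young gives
`φ(S x) ≥ ⟪x, S x⟫ - u x - ‖S x‖²/2`, with equality when `S x = ∇u x`; rearranged, this says
`φ(∇u x) ≤ φ(S x) + c(x, S x) - c(x, ∇u x)`. Since `φ ∘ S` and `φ ∘ ∇u` have the same law,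
integrating makes the `φ` terms cancel. They need not be integrable, so the cancellation is
done on truncations of `φ` and the truncation level is sent to infinity by dominated convergence.
-/

open MeasureTheory Filter Topology
open scoped RealInnerProductSpace

theorem ConvexOn.add_le_of_hasFDerivAt {E : Type*} [NormedAddCommGroup E] [NormedSpace ℝ E]
    {s : Set E} {f : E → ℝ} {f' : E →L[ℝ] ℝ} {x z : E} (hf : ConvexOn ℝ s f) (hx : x ∈ s)
    (hz : z ∈ s) (hf' : HasFDerivAt f f' x) :
    f x + f' (z - x) ≤ f z := by
  let l : ℝ →ᵃ[ℝ] E := AffineMap.lineMap x z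
  have hl0 : l 0 = x := AffineMap.lineMap_apply_zero x z
  have hl1 : l 1 = z := AffineMap.lineMap_apply_one x z
  have hline : ConvexOn ℝ (l ⁻¹' s) (f ∘ l) := hf.comp_affineMap l
  have hderiv : HasDerivAt (f ∘ l) (f' (z - x)) 0 := by
    rw [← hl0] at hf'
    exact hf'.comp_hasDerivAt (0 : ℝ) AffineMap.hasDerivAt_lineMap
  have := hline.le_slope_of_hasDerivAt (by simpa [hl0]) (by simpa [hl1]) one_pos hderiv
  simp only [slope_def_field, Function.comp_apply, hl0, hl1, sub_zero, div_one] at this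
  linarith

theorem integral_nonneg_of_map_eq_of_le_add {Ω : Type*} [MeasurableSpace Ω] {μ : Measure Ω}
    [IsFiniteMeasure μ] {A B D : Ω → ℝ} (hA : AEMeasurable A μ) (hB : AEMeasurable B μ)
    (hAB : μ.map A = μ.map B) (hD : Integrable D μ) (hle : ∀ᵐ ω ∂μ, B ω ≤ A ω + D ω) :
    0 ≤ ∫ ω, D ω ∂μ := by
  let clamp (n : ℕ) (a : ℝ) : ℝ := max (min a n) (-n)
  have clamp_mono (n : ℕ) : Monotone (clamp n) := fun a b h =>
    max_le_max_right _ (min_le_min_right _ h)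
  have clamp_sub_le (n : ℕ) (a b : ℝ) : |clamp n a - clamp n b| ≤ |a - b| :=
    (abs_max_sub_max_le_abs _ _ _).trans ((abs_min_sub_min_le_max _ _ _ _).trans (by simp))
  have clamp_of_abs_le {n : ℕ} {a : ℝ} (h : |a| ≤ n) : clamp n a = a := by
    rw [abs_le] at h
    simp only [clamp, min_eq_left h.2, max_eq_left h.1]
  have integrable_clamp (n : ℕ) {f : Ω → ℝ} (hf : AEMeasurable f μ) :
      Integrable (fun ω => clamp n (f ω)) μ := by
    refine .of_bound (by fun_prop) n (ae_of_all _ fun ω => ?_)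
    simp only [clamp, Real.norm_eq_abs, abs_le]
    constructor <;> simp
  have integral_clamp_eq (n : ℕ) : ∫ ω, clamp n (A ω) ∂μ = ∫ ω, clamp n (B ω) ∂μ := by
    rw [← integral_map hA (by fun_prop), hAB, integral_map hB (by fun_prop)]
  have hAD : AEMeasurable (fun ω => A ω + D ω) μ := hA.add hD.aemeasurable
  set F : ℕ → Ω → ℝ := fun n ω => clamp n (A ω + D ω) - clamp n (A ω)
  have integral_F_nonneg (n : ℕ) : 0 ≤ ∫ ω, F n ω ∂μ := by
    rw [integral_sub (integrable_clamp n hAD) (integrable_clamp n hA), integral_clamp_eq,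
      sub_nonneg]
    exact integral_mono_ae (integrable_clamp n hB) (integrable_clamp n hAD)
      (hle.mono fun ω h => clamp_mono n h)
  have F_tendsto (ω : Ω) : Tendsto (F · ω) atTop (𝓝 (D ω)) := by
    refine tendsto_atTop_of_eventually_const (i₀ := ⌈|A ω| + |D ω|⌉₊) fun n hn => ?_
    have hn' : |A ω| + |D ω| ≤ n := (Nat.le_ceil _).trans (by exact_mod_cast hn)
    show clamp n (A ω + D ω) - clamp n (A ω) = D ω
    rw [clamp_of_abs_le ((abs_add_le _ _).trans hn'),
      clamp_of_abs_le ((le_add_of_nonneg_right (abs_nonneg _)).trans hn')]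
    ring
  refine ge_of_tendsto' (tendsto_integral_of_dominated_convergence (fun ω => |D ω|)
    (fun n => ?_) hD.abs (fun n => ae_of_all _ fun ω => ?_) (ae_of_all _ F_tendsto))
    integral_F_nonneg
  · exact ((integrable_clamp n hAD).sub (integrable_clamp n hA)).1
  · simpa [F] using clamp_sub_le n (A ω + D ω) (A ω)

section ShiftedConjugate

variable {E : Type*} [NormedAddCommGroup E] [InnerProductSpace ℝ E]

/-- `u*(y) - ‖y‖²/2`, where `u*` is the convex conjugate of `u`; it may take the value `⊤`. -/
noncomputable def shiftedConjugate (u : E → ℝ) (y : E) : EReal :=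
  ⨆ x, ((⟪x, y⟫ - u x - (1/2) * ‖y‖ ^ 2 : ℝ) : EReal)

theorem measurable_shiftedConjugate [MeasurableSpace E] [OpensMeasurableSpace E] (u : E → ℝ) :
    Measurable (shiftedConjugate u) := by
  refine LowerSemicontinuous.measurable (lowerSemicontinuous_iSup fun x => ?_)
  refine Continuous.lowerSemicontinuous (continuous_coe_real_ereal.comp ?_)
  fun_prop

theorem le_shiftedConjugate (u : E → ℝ) (x y : E) :
    ((⟪x, y⟫ - u x - (1/2) * ‖y‖ ^ 2 : ℝ) : EReal) ≤ shiftedConjugate u y :=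
  le_iSup (fun x => ((⟪x, y⟫ - u x - (1/2) * ‖y‖ ^ 2 : ℝ) : EReal)) x

theorem le_toReal_shiftedConjugate (u : E → ℝ) (x : E) {y : E}
    (hy : shiftedConjugate u y ≠ ⊤) :
    ⟪x, y⟫ - u x - (1/2) * ‖y‖ ^ 2 ≤ (shiftedConjugate u y).toReal :=
  (EReal.toReal_coe _).symm.le.trans <|
    EReal.toReal_le_toReal (le_shiftedConjugate u x y) (EReal.coe_ne_bot _) hy

theorem shiftedConjugate_gradient [CompleteSpace E] {u : E → ℝ} (hu : ConvexOn ℝ Set.univ u)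
    {x : E} (hx : DifferentiableAt ℝ u x) :
    shiftedConjugate u (gradient u x) =
      ((⟪x, gradient u x⟫ - u x - (1/2) * ‖gradient u x‖ ^ 2 : ℝ) : EReal) := by
  refine le_antisymm (iSup_le fun z => EReal.coe_le_coe_iff.2 ?_) (le_shiftedConjugate u x _)
  have := hu.add_le_of_hasFDerivAt trivial trivial hx.hasGradientAt.hasFDerivAt (z := z)
  rw [InnerProductSpace.toDual_apply_apply, inner_sub_right, real_inner_comm z,
    real_inner_comm x] at this
  linarith

end ShiftedConjugate

theorem gradient_of_convex_is_optimal_general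
    {d : ℕ} (u : EuclideanSpace ℝ (Fin d) → ℝ)
    (hu_cvx : ConvexOn ℝ Set.univ u) (hu_diff : Differentiable ℝ u)
    (ν : Measure (EuclideanSpace ℝ (Fin d))) [IsProbabilityMeasure ν]
    (S : EuclideanSpace ℝ (Fin d) → EuclideanSpace ℝ (Fin d))
    (hS : AEMeasurable S ν)
    (hpush : Measure.map (fun x => gradient u x) ν = Measure.map S ν)
    (hIT : Integrable (fun x => (1/2) * ‖x - gradient u x‖ ^ 2) ν)
    (hIS : Integrable (fun x => (1/2) * ‖x - S x‖ ^ 2) ν) :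
    ∫ x, (1/2) * ‖x - gradient u x‖ ^ 2 ∂ν ≤ ∫ x, (1/2) * ‖x - S x‖ ^ 2 ∂ν := by
  set g := shiftedConjugate u
  have hg : Measurable g := measurable_shiftedConjugate u
  have hg_toReal : Measurable (EReal.toReal ∘ g) := measurable_ereal_toReal.comp hg
  have hT : Measurable (gradient u) :=
    (InnerProductSpace.toDual ℝ _).symm.continuous.measurable.comp (measurable_fderiv ℝ u)
  have hgT (x) : g (gradient u x) = _ := shiftedConjugate_gradient hu_cvx (hu_diff x)
  have hgS_ne_top : ∀ᵐ x ∂ν, g (S x) ≠ ⊤ := by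
    refine ae_of_ae_map hS (p := fun y => g y ≠ ⊤) ?_
    rw [← hpush]
    exact (ae_map_iff hT.aemeasurable (hg (measurableSet_singleton ⊤)).compl).2
      (ae_of_all _ fun x => (hgT x).trans_ne (EReal.coe_ne_top _))
  have hmap : ν.map ((EReal.toReal ∘ g) ∘ S) = ν.map ((EReal.toReal ∘ g) ∘ gradient u) := by
    rw [← AEMeasurable.map_map_of_aemeasurable hg_toReal.aemeasurable hS, ← hpush,
      AEMeasurable.map_map_of_aemeasurable hg_toReal.aemeasurable hT.aemeasurable]
  have hle : ∀ᵐ x ∂ν, (g (gradient u x)).toReal ≤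
      (g (S x)).toReal + ((1/2) * ‖x - S x‖ ^ 2 - (1/2) * ‖x - gradient u x‖ ^ 2) := by
    filter_upwards [hgS_ne_top] with x hx
    have := le_toReal_shiftedConjugate u x hx
    rw [hgT, EReal.toReal_coe, norm_sub_sq_real, norm_sub_sq_real]
    linarith
  have key := integral_nonneg_of_map_eq_of_le_add
    (D := fun x => (1/2) * ‖x - S x‖ ^ 2 - (1/2) * ‖x - gradient u x‖ ^ 2)
    (hg_toReal.comp_aemeasurable hS) (hg_toReal.comp hT).aemeasurable hmap (hIS.sub hIT) hle
  rw [integral_sub hIS hIT] at key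
  linarith

/-- Brenier: the gradient of a convex function is optimal for the quadratic cost
among all maps with the same push-forward. -/
theorem gradient_of_convex_is_optimal
    {d : ℕ} (u : EuclideanSpace ℝ (Fin d) → ℝ)
    (hu_cvx : ConvexOn ℝ Set.univ u) (hu_diff : Differentiable ℝ u)
    (ν : Measure (EuclideanSpace ℝ (Fin d))) [IsProbabilityMeasure ν]
    (hac : ν ≪ volume)
    (S : EuclideanSpace ℝ (Fin d) → EuclideanSpace ℝ (Fin d))
    (hS : AEMeasurable S ν)
    (hpush : Measure.map (fun x => gradient u x) ν = Measure.map S ν)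
    (hIT : Integrable (fun x => (1/2) * ‖x - gradient u x‖ ^ 2) ν)
    (hIS : Integrable (fun x => (1/2) * ‖x - S x‖ ^ 2) ν) :
    ∫ x, (1/2) * ‖x - gradient u x‖ ^ 2 ∂ν ≤ ∫ x, (1/2) * ‖x - S x‖ ^ 2 ∂ν :=
  gradient_of_convex_is_optimal_general u hu_cvx hu_diff ν S hS hpush hIT hIS
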